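/- arXiv:1908.06823 — 6 statements merged into one kernel-verified Lean document; each statement's English description precedes it below -/
import Mathlib

section
/- Generalized Hopf formula: let F = ⟨f₁⟩ ∗ ⋯ ∗ ⟨f_d⟩ be a free product of cyclic groups (each factor finite cyclic or infinite cyclic), let R be a normal subgroup of F, and let G = F/R. Then the second integral group homology H₂(G;ℤ) is isomorphic to ([F,F] ∩ R)/[R,F]. -/
/-- The free product `⟨f₁⟩ ∗ ⋯ ∗ ⟨f_d⟩` of cyclic groups, the `i`-th factor being cyclic of
order `m i` (with `m i = 0` corresponding to an infinite cyclic factor, since `ZMod 0 = ℤ`). -/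
abbrev FreeProdCyclic {ι : Type*} (m : ι → ℕ) : Type _ :=
  Monoid.CoprodI (fun i : ι => Multiplicative (ZMod (m i)))

/-- The distinguished generator `fᵢ` of the `i`-th cyclic free factor. -/
def cyclicGen {ι : Type*} (m : ι → ℕ) (i : ι) : FreeProdCyclic m :=
  Monoid.CoprodI.of (Multiplicative.ofAdd (1 : ZMod (m i)))

/-- The quotient `([F,F] ⊓ R) / [R,F]` appearing in the Hopf formula. -/
abbrev hopfQuotient {F : Type*} [Group F] (R : Subgroup F) : Type _ :=
  ↥(⁅(⊤ : Subgroup F), (⊤ : Subgroup F)⁆ ⊓ R) ⧸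
    ((⁅R, (⊤ : Subgroup F)⁆).subgroupOf (⁅(⊤ : Subgroup F), (⊤ : Subgroup F)⁆ ⊓ R))

instance hopfQuotient_normal {F : Type*} [Group F] (R : Subgroup F) [R.Normal] :
    ((⁅R, (⊤ : Subgroup F)⁆).subgroupOf
      (⁅(⊤ : Subgroup F), (⊤ : Subgroup F)⁆ ⊓ R)).Normal :=
  Subgroup.Normal.subgroupOf inferInstance _

/-- The second integral homology `H₂(G;ℤ)` of a group `G`, realized via the Hopf formula
`H₂(G;ℤ) ≅ ([F,F] ⊓ R)/[R,F]` applied to the canonical presentation `1 → R → F → G → 1`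
of `G` by the free group `F` on the underlying set of `G` (with projection `F → G`
induced by the identity map, whose kernel is `R`). -/
abbrev H2Z (G : Type*) [Group G] : Type _ :=
  hopfQuotient (MonoidHom.ker (FreeGroup.lift (id : G → G)))

/-!
The Hopf quotient `([F,F] ⊓ R) / [R,F]` is functorial in maps of groups over `G`, and two
lifts of the same map induce the same map on it, because modulo `[R,F]` their discrepancy
is central. Since free groups lift through surjections, any two free presentations of `G`
have isomorphic Hopf quotients; `H2Z` uses the one by the free group on `G`, so we may use
the free group `Φ` on the `fᵢ` instead. The projection `Φ → F`, with kernel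
`N = ⟨⟨fᵢ ^ mᵢ⟩⟩`, then induces an isomorphism of Hopf quotients as soon as
`N ⊓ [Φ,Φ] ≤ [N,Φ]`, i.e. as soon as `H₂(F) = 0`.
-/
open Subgroup
open scoped IsMulCommutative commutatorElement

section Central

variable {L Q : Type*} [Group L] [Group Q]

theorem QuotientGroup.mk_mem_center_of_mem {S : Subgroup Q} [S.Normal] {s : Q} (hs : s ∈ S) :
    (s : Q ⧸ ⁅S, (⊤ : Subgroup Q)⁆) ∈ center (Q ⧸ ⁅S, (⊤ : Subgroup Q)⁆) := by
  refine mem_center_iff.mpr fun g => ?_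
  induction g using QuotientGroup.induction_on with
  | H g =>
    rw [← QuotientGroup.mk_mul, ← QuotientGroup.mk_mul, QuotientGroup.eq]
    have : (g * s)⁻¹ * (s * g) = ⁅s⁻¹, g⁻¹⁆ := by rw [commutatorElement_def]; group
    exact this ▸ commutator_mem_commutator (inv_mem hs) (mem_top _)

def MonoidHom.centralDiff (γ δ : L →* Q) (h : ∀ a, (δ a)⁻¹ * γ a ∈ center Q) :
    L →* center Q where
  toFun a := ⟨(δ a)⁻¹ * γ a, h a⟩
  map_one' := by ext; simp
  map_mul' a b := by
    ext
    have := mem_center_iff.mp (h a) ((δ b)⁻¹)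
    simp only [map_mul, mul_inv_rev, Subgroup.coe_mul]
    calc (δ b)⁻¹ * (δ a)⁻¹ * (γ a * γ b) = ((δ b)⁻¹ * ((δ a)⁻¹ * γ a)) * γ b := by group
      _ = _ := by rw [this]; group

theorem MonoidHom.eq_of_mem_commutator_of_inv_mul_mem_center (γ δ : L →* Q)
    (h : ∀ a, (δ a)⁻¹ * γ a ∈ center Q) {x : L} (hx : x ∈ commutator L) : γ x = δ x := by
  have := congrArg Subtype.val (Abelianization.commutator_subset_ker (γ.centralDiff δ h) hx)
  exact (inv_mul_eq_one.mp this).symm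

theorem Subgroup.normalClosure_eq_closure_of_subset_center {s : Set Q}
    (hs : s ⊆ center Q) : normalClosure s = closure s := by
  have : (closure s).Normal := ⟨fun x hx g => by
    rw [mem_center_iff.mp ((closure_le _).mpr hs hx) g, mul_inv_cancel_right]; exact hx⟩
  exact le_antisymm (normalClosure_le_normal subset_closure) closure_le_normalClosure

end Central

def ZMod.liftPow {Q : Type*} [Group Q] {n : ℕ} (g : Q) (hg : g ^ n = 1) :
    Multiplicative (ZMod n) →* Q :=
  AddMonoidHom.toMultiplicativeLeft
    (ZMod.lift n ⟨zmultiplesHom _ (Additive.ofMul g), by simp [← ofMul_pow, hg]⟩)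

theorem ZMod.liftPow_ofAdd_one {Q : Type*} [Group Q] {n : ℕ} (g : Q) (hg : g ^ n = 1) :
    ZMod.liftPow g hg (Multiplicative.ofAdd 1) = g := by
  rw [ZMod.liftPow, AddMonoidHom.coe_toMultiplicativeLeft, Function.comp_apply,
    Function.comp_apply, toAdd_ofAdd, ← Int.cast_one, ZMod.lift_coe]
  simp

theorem FreeGroup.exists_comp_eq {α G M : Type*} [Group G] [Group M] (π : FreeGroup α →* G)
    {τ : M →* G} (hτ : Function.Surjective τ) : ∃ γ : FreeGroup α →* M, τ.comp γ = π :=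
  ⟨FreeGroup.lift (Function.surjInv hτ ∘ π ∘ FreeGroup.of),
    FreeGroup.ext_hom _ _ fun a => by simp [Function.surjInv_eq hτ]⟩

namespace hopfQuotient

variable {L M P G : Type*} [Group L] [Group M] [Group P] [Group G]

theorem map_commutator_inf_le (γ : L →* M) {S : Subgroup L} {T : Subgroup M}
    (h : S ≤ T.comap γ) : (commutator L ⊓ S).map γ ≤ commutator M ⊓ T :=
  (map_inf_le _ _ _).trans <| inf_le_inf
    ((map_commutator_eq L γ).trans_le (commutator_mono le_top le_top)) (map_le_iff_le_comap.mpr h)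

theorem map_commutator_top_le (γ : L →* M) {S : Subgroup L} {T : Subgroup M}
    (h : S ≤ T.comap γ) : ⁅S, (⊤ : Subgroup L)⁆.map γ ≤ ⁅T, (⊤ : Subgroup M)⁆ := by
  rw [map_commutator]
  exact commutator_mono (map_le_iff_le_comap.mpr h) le_top

def map (γ : L →* M) {S : Subgroup L} {T : Subgroup M} [S.Normal] [T.Normal]
    (h : S ≤ T.comap γ) : hopfQuotient S →* hopfQuotient T :=
  QuotientGroup.map _ _ ((inclusion (map_commutator_inf_le γ h)).comp (γ.subgroupMap _))
    fun x hx => map_commutator_top_le γ h ⟨x, hx, rfl⟩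

theorem map_mk (γ : L →* M) {S : Subgroup L} {T : Subgroup M} [S.Normal] [T.Normal]
    (h : S ≤ T.comap γ) (x : ↥(⁅(⊤ : Subgroup L), ⊤⁆ ⊓ S)) :
    map γ h (QuotientGroup.mk x) = QuotientGroup.mk
      (⟨γ x, map_commutator_inf_le γ h ⟨x, x.2, rfl⟩⟩ : ↥(⁅(⊤ : Subgroup M), ⊤⁆ ⊓ T)) :=
  rfl

theorem map_id (S : Subgroup L) [S.Normal] :
    map (MonoidHom.id L) (comap_id S).ge = MonoidHom.id _ := by
  ext
  rfl

theorem map_comp (γ : L →* M) (γ' : M →* P) {S : Subgroup L} {T : Subgroup M} {U : Subgroup P}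
    [S.Normal] [T.Normal] [U.Normal] (hST : S ≤ T.comap γ) (hTU : T ≤ U.comap γ') :
    (map γ' hTU).comp (map γ hST) =
      map (γ'.comp γ) ((hST.trans (comap_mono hTU)).trans_eq (comap_comap _ _ _)) := by
  ext
  rfl

/-- The discrepancy `a ↦ (γ a)⁻¹ * δ a` takes values in the central subgroup
`ker σ / [ker σ, M]`, so it is a homomorphism there and vanishes on commutators. -/
theorem map_eq_of_comp_eq (σ : M →* G) {γ δ : L →* M} (hγδ : σ.comp γ = σ.comp δ)
    {S : Subgroup L} [S.Normal] (hγ : S ≤ σ.ker.comap γ) (hδ : S ≤ σ.ker.comap δ) :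
    map γ hγ = map δ hδ := by
  ext x
  let π := QuotientGroup.mk' ⁅σ.ker, (⊤ : Subgroup M)⁆
  have hcentral : ∀ a, ((π.comp γ) a)⁻¹ * (π.comp δ) a ∈ center _ := fun a => by
    refine QuotientGroup.mk_mem_center_of_mem (S := σ.ker) ?_
    rw [MonoidHom.mem_ker, map_mul, map_inv, ← σ.comp_apply, hγδ, σ.comp_apply, inv_mul_cancel]
  have := (π.comp δ).eq_of_mem_commutator_of_inv_mul_mem_center (π.comp γ) hcentral x.2.1
  have hdiff := QuotientGroup.eq.mp this.symm
  exact QuotientGroup.eq.mpr hdiff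

theorem ker_le_comap_ker {σ : L →* G} {τ : M →* G} {γ : L →* M} (hγ : τ.comp γ = σ) :
    σ.ker ≤ τ.ker.comap γ :=
  (hγ ▸ MonoidHom.comap_ker τ γ).ge

theorem map_comp_map_of_comp_eq {σ : L →* G} {τ : M →* G} {γ : L →* M} {δ : M →* L}
    (hγ : τ.comp γ = σ) (hδ : σ.comp δ = τ) :
    (map δ (ker_le_comap_ker hδ)).comp (map γ (ker_le_comap_ker hγ)) = MonoidHom.id _ :=
  (map_comp _ _ _ _).trans <|
    (map_eq_of_comp_eq σ (by rw [← MonoidHom.comp_assoc, hδ, hγ, MonoidHom.comp_id]) _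
      (comap_id _).ge).trans (map_id _)

def mulEquivOfLifts {σ : L →* G} {τ : M →* G} {γ : L →* M} {δ : M →* L}
    (hγ : τ.comp γ = σ) (hδ : σ.comp δ = τ) : hopfQuotient σ.ker ≃* hopfQuotient τ.ker :=
  MonoidHom.toMulEquiv _ _ (map_comp_map_of_comp_eq hγ hδ) (map_comp_map_of_comp_eq hδ hγ)

theorem nonempty_mulEquiv_of_freeGroup {α β : Type*} {σ : FreeGroup α →* G}
    {τ : FreeGroup β →* G} (hσ : Function.Surjective σ) (hτ : Function.Surjective τ) :
    Nonempty (hopfQuotient σ.ker ≃* hopfQuotient τ.ker) :=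
  have ⟨_, hγ⟩ := FreeGroup.exists_comp_eq σ hτ
  have ⟨_, hδ⟩ := FreeGroup.exists_comp_eq τ hσ
  ⟨mulEquivOfLifts hγ hδ⟩

theorem map_bijective_of_eq_comap {q : L →* M} (hq : Function.Surjective q)
    (hker : q.ker ⊓ commutator L ≤ ⁅q.ker, (⊤ : Subgroup L)⁆) {R : Subgroup M} [R.Normal]
    {S : Subgroup L} [S.Normal] (hS : S = R.comap q) : Function.Bijective (map q hS.le) := by
  subst hS
  have hcomm : (commutator L).map q = commutator M := by
    rw [map_commutator_eq, q.range_eq_top.mpr hq, commutator_def]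
  have hR : ⁅R.comap q, (⊤ : Subgroup L)⁆.map q = ⁅R, (⊤ : Subgroup M)⁆ := by
    rw [map_commutator, map_comap_eq_self_of_surjective hq, map_top_of_surjective _ hq]
  constructor
  · refine (injective_iff_map_eq_one _).mpr fun a ha => ?_
    induction a using QuotientGroup.induction_on with
    | H x =>
      rw [map_mk, QuotientGroup.eq_one_iff, mem_subgroupOf, ← hR] at ha
      obtain ⟨c, hc, hcx⟩ := ha
      have hxc : (x : L) * c⁻¹ ∈ q.ker ⊓ commutator L := mem_inf.mpr
        ⟨by rw [MonoidHom.mem_ker, map_mul, map_inv, hcx, mul_inv_cancel],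
          mul_mem x.2.1 (inv_mem (commutator_mono le_top le_top hc))⟩
      have hker' : ⁅q.ker, (⊤ : Subgroup L)⁆ ≤ ⁅R.comap q, (⊤ : Subgroup L)⁆ :=
        commutator_mono (MonoidHom.ker_le_comap q R) le_top
      rw [QuotientGroup.eq_one_iff, mem_subgroupOf, ← inv_mul_cancel_right (x : L) c]
      exact mul_mem (hker' (hker hxc)) hc
  · intro y
    induction y using QuotientGroup.induction_on with
    | H y =>
      obtain ⟨x, hx, hxy⟩ : (y : M) ∈ (commutator L).map q := hcomm ▸ y.2.1
      refine ⟨QuotientGroup.mk ⟨x, hx, show q x ∈ R from hxy ▸ y.2.2⟩, ?_⟩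
      rw [map_mk]
      exact congrArg _ (Subtype.ext hxy)

end hopfQuotient

namespace FreeProdCyclic

variable {ι : Type*} (m : ι → ℕ)

def proj : FreeGroup ι →* FreeProdCyclic m :=
  FreeGroup.lift (cyclicGen m)

@[simp]
theorem proj_of (i : ι) : proj m (FreeGroup.of i) = cyclicGen m i :=
  FreeGroup.lift_apply_of

theorem cyclicGen_zpow (i : ι) (k : ℤ) :
    cyclicGen m i ^ k = Monoid.CoprodI.of (M := fun i => Multiplicative (ZMod (m i)))
      (Multiplicative.ofAdd (k : ZMod (m i))) := by
  rw [cyclicGen, ← map_zpow, ← ofAdd_zsmul, zsmul_one]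

theorem cyclicGen_pow_self (i : ι) : cyclicGen m i ^ m i = 1 := by
  rw [← zpow_natCast, cyclicGen_zpow, Int.cast_natCast, ZMod.natCast_self, ofAdd_zero, map_one]

theorem proj_surjective : Function.Surjective (proj m) := by
  intro y
  induction y using Monoid.CoprodI.induction_on with
  | one => exact ⟨1, map_one _⟩
  | of i a =>
    refine ⟨FreeGroup.of i ^ (ZMod.cast a.toAdd : ℤ), ?_⟩
    rw [map_zpow, proj_of, cyclicGen_zpow, ZMod.intCast_zmod_cast, ofAdd_toAdd]
  | mul x y hx hy =>
    obtain ⟨a, rfl⟩ := hx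
    obtain ⟨b, rfl⟩ := hy
    exact ⟨a * b, map_mul _ _ _⟩

theorem of_pow_mem_ker_proj (i : ι) : FreeGroup.of i ^ m i ∈ (proj m).ker := by
  rw [MonoidHom.mem_ker, map_pow, proj_of, cyclicGen_pow_self]

theorem ker_proj :
    (proj m).ker = normalClosure (Set.range fun i => FreeGroup.of i ^ m i) := by
  set K := normalClosure (Set.range fun i => FreeGroup.of i ^ m i)
  refine le_antisymm ?_ (normalClosure_le_normal ?_)
  · have hK : ∀ i, (QuotientGroup.mk' K (FreeGroup.of i)) ^ m i = 1 := fun i =>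
      (QuotientGroup.eq_one_iff _).mpr (subset_normalClosure ⟨i, rfl⟩)
    let φ : FreeProdCyclic m →* FreeGroup ι ⧸ K :=
      Monoid.CoprodI.lift fun i => ZMod.liftPow _ (hK i)
    have hφ : φ.comp (proj m) = QuotientGroup.mk' K :=
      FreeGroup.ext_hom _ _ fun i => by simp [φ, cyclicGen, ZMod.liftPow_ofAdd_one]
    intro n hn
    rw [← QuotientGroup.ker_mk' K, ← hφ, MonoidHom.mem_ker, MonoidHom.comp_apply,
      MonoidHom.mem_ker.mp hn, map_one]
  · rintro _ ⟨i, rfl⟩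
    exact of_pow_mem_ker_proj m i

def relator (i : ι) : center (FreeGroup ι ⧸ ⁅(proj m).ker, (⊤ : Subgroup (FreeGroup ι))⁆) :=
  ⟨QuotientGroup.mk (FreeGroup.of i ^ m i),
    QuotientGroup.mk_mem_center_of_mem (of_pow_mem_ker_proj m i)⟩

theorem map_ker_proj_eq_closure_relator :
    (proj m).ker.map (QuotientGroup.mk' _) =
      (closure (Set.range (relator m))).map (center _).subtype := by
  refine (congrArg _ (ker_proj m)).trans ?_
  rw [map_normalClosure _ _ (QuotientGroup.mk'_surjective _), MonoidHom.map_closure,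
    ← Set.range_comp, ← Set.range_comp]
  exact normalClosure_eq_closure_of_subset_center
    (Set.range_subset_iff.mpr fun i => (relator m i).2)

/-- The exponent sum of `fᵢ`, which vanishes on commutators, is `mᵢ * a i` on this product. -/
theorem relator_zpow_eq_one {a : ι →₀ ℤ}
    (ha : (center _).subtype (a.prod fun j k => relator m j ^ k) ∈ commutator _)
    (i : ι) : relator m i ^ a i = 1 := by
  classical
  let χ : FreeGroup ι →* Multiplicative ℤ := FreeGroup.lift (Pi.mulSingle i (.ofAdd 1))
  let χ' := QuotientGroup.lift ⁅(proj m).ker, (⊤ : Subgroup (FreeGroup ι))⁆ χ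
    ((commutator_mono le_top le_top).trans (Abelianization.commutator_subset_ker χ))
  let e := χ'.comp (center _).subtype
  have he : e (relator m i) = Multiplicative.ofAdd (m i : ℤ) := by
    simp [e, χ', χ, relator, ← ofAdd_nsmul]
  have he_ne : ∀ j ≠ i, e (relator m j) = 1 := fun j hj => by
    simp [e, χ', χ, relator, hj]
  have hprod : e (relator m i) ^ a i = 1 := by
    rw [← Finsupp.prod_eq_single i (g := fun j k => e (relator m j) ^ k)
      (fun j _ hj => by rw [he_ne j hj, one_zpow]) (fun _ => zpow_zero _)]
    simp only [← map_zpow]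
    rw [← map_finsuppProd]
    exact Abelianization.commutator_subset_ker χ' ha
  rw [he, ← ofAdd_zsmul, ofAdd_eq_one, smul_eq_mul, mul_eq_zero, Nat.cast_eq_zero] at hprod
  rcases hprod with hai | hmi
  · rw [hai, zpow_zero]
  · rw [show relator m i = 1 from Subtype.ext (by simp [relator, hmi]), one_zpow]

/-- Modulo `[N, Φ]` the relators `fᵢ ^ mᵢ` are central, so they generate the image of `N`;
by `relator_zpow_eq_one` none of their nontrivial products is a product of commutators. -/
theorem ker_proj_inf_commutator_le :
    (proj m).ker ⊓ commutator (FreeGroup ι) ≤ ⁅(proj m).ker, (⊤ : Subgroup (FreeGroup ι))⁆ := by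
  rintro n ⟨hnN, hnc⟩
  let π := QuotientGroup.mk' ⁅(proj m).ker, (⊤ : Subgroup (FreeGroup ι))⁆
  obtain ⟨z, hz, hzn⟩ : π n ∈ (closure (Set.range (relator m))).map (center _).subtype :=
    map_ker_proj_eq_closure_relator m ▸ mem_map_of_mem π hnN
  obtain ⟨a, rfl⟩ := exists_finsupp_of_mem_closure_range _ z hz
  have hcomm : π n ∈ commutator _ :=
    (map_commutator_eq _ π).trans_le (commutator_mono le_top le_top) (mem_map_of_mem π hnc)
  rw [← hzn] at hcomm
  rw [← QuotientGroup.eq_one_iff, ← QuotientGroup.mk'_apply, ← hzn, Finsupp.prod,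
    Finset.prod_eq_one fun i _ => relator_zpow_eq_one m hcomm i, map_one]

end FreeProdCyclic

theorem generalized_hopf_formula {d : ℕ} (m : Fin d → ℕ)
    (R : Subgroup (FreeProdCyclic m)) [R.Normal] :
    Nonempty (H2Z (FreeProdCyclic m ⧸ R) ≃* hopfQuotient R) := by
  let q := FreeProdCyclic.proj m
  let π := (QuotientGroup.mk' R).comp q
  have hπ : Function.Surjective π :=
    (QuotientGroup.mk'_surjective R).comp (FreeProdCyclic.proj_surjective m)
  have hπker : π.ker = R.comap q := by rw [← MonoidHom.comap_ker, QuotientGroup.ker_mk']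
  obtain ⟨e⟩ := hopfQuotient.nonempty_mulEquiv_of_freeGroup
    (fun g => ⟨FreeGroup.of g, FreeGroup.lift_apply_of⟩) hπ
  exact ⟨e.trans (MulEquiv.ofBijective _ (hopfQuotient.map_bijective_of_eq_comap
    (FreeProdCyclic.proj_surjective m) (FreeProdCyclic.ker_proj_inf_commutator_le m) hπker))⟩
end

section
/- Let 1 → R → F →π→ G → 1 be a periodic presentation of a finite group G, with periods m₁, …, m_d, and let p be a prime. Then the periodic cover E = F/[R,F] is a p-group if and only if G is a p-group and every period m_i is a power of p. -/
namespace Monoid.CoprodI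

variable {ι : Type*} [Fintype ι] [DecidableEq ι] {G : ι → Type*} [∀ i, CommGroup (G i)]

noncomputable def abelianizationEquivPi : Abelianization (CoprodI G) ≃* ∀ i, G i :=
  MonoidHom.toMulEquiv (Abelianization.lift (lift (MonoidHom.mulSingle G)))
    (MonoidHom.noncommPiCoprod (fun i => Abelianization.of.comp of)
      -- typed as `Pairwise` (not a bare lambda) so that `simp` can use `noncommPiCoprod_mulSingle`
      (show Pairwise _ from fun _ _ _ _ _ => Commute.all _ _))
    (Abelianization.hom_ext _ _ <| ext_hom _ _ fun i => MonoidHom.ext fun x => by simp)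
    (MonoidHom.functions_ext' _ _ _ fun i => MonoidHom.ext fun x => by simp)

end Monoid.CoprodI

def Abelianization.quotientEquivOfLeCommutator {F : Type*} [Group F] (N : Subgroup F) [N.Normal]
    (h : N ≤ commutator F) : Abelianization (F ⧸ N) ≃* Abelianization F :=
  MonoidHom.toMulEquiv
    (Abelianization.lift
      (QuotientGroup.lift N Abelianization.of (h.trans (Abelianization.ker_of F).ge)))
    (Abelianization.map (QuotientGroup.mk' N))
    (Abelianization.hom_ext _ _ <| QuotientGroup.monoidHom_ext _ rfl)
    (Abelianization.hom_ext _ _ rfl)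

theorem MulEquiv.isPGroup_iff {p : ℕ} {G H : Type*} [Group G] [Group H] (e : G ≃* H) :
    IsPGroup p G ↔ IsPGroup p H :=
  ⟨fun h => h.of_equiv e, fun h => h.of_equiv e.symm⟩

namespace IsPGroup

variable {p : ℕ} {G : Type*} [Group G]

theorem of_ker {Q : Type*} [Group Q] (f : G →* Q) (hQ : IsPGroup p Q) (hker : IsPGroup p f.ker) :
    IsPGroup p G := fun g => by
  obtain ⟨j, hj⟩ := hQ (f g)
  obtain ⟨k, hk⟩ := hker ⟨g ^ p ^ j, by rwa [f.mem_ker, map_pow]⟩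
  exact ⟨j + k, by rw [pow_add, pow_mul]; exact congrArg Subtype.val hk⟩

theorem of_commutator_of_abelianization (h₁ : IsPGroup p (commutator G))
    (h₂ : IsPGroup p (Abelianization G)) : IsPGroup p G :=
  of_ker Abelianization.of h₂ (by rwa [Abelianization.ker_of])

end IsPGroup

open Subgroup IsMulCommutative in
theorem pow_index_center_eq_one_of_mem_commutator {G : Type*} [Group G] [(center G).FiniteIndex]
    {g : G} (hg : g ∈ commutator G) : g ^ (center G).index = 1 := by
  simpa only [MonoidHom.mem_ker, Subtype.ext_iff] using!
    Abelianization.commutator_subset_ker (MonoidHom.transferCenterPow G) hg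

open Subgroup in
theorem IsPGroup.commutator_of_ker_le_center {p : ℕ} {G Q : Type*} [Group G] [Group Q] [Finite Q]
    (hQ : IsPGroup p Q) (f : G →* Q) (hf : Function.Surjective f) (hker : f.ker ≤ center G) :
    IsPGroup p (commutator G) := by
  obtain ⟨n, hn⟩ := isPGroup_iff_card_dvd_pow.1 hQ
  have hindex : f.ker.index = Nat.card Q := by
    rw [index_ker, f.range_eq_top.2 hf, card_top]
  have : (center G).FiniteIndex := finiteIndex_of_le hker
  have hdvd : (center G).index ∣ p ^ n := (index_dvd_of_le hker).trans (hindex ▸ hn)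
  refine fun g => ⟨n, Subtype.ext ?_⟩
  obtain ⟨c, hc⟩ := hdvd
  rw [coe_pow, hc, pow_mul, pow_index_center_eq_one_of_mem_commutator g.2, one_pow, coe_one]

theorem isPGroup_pi_iff {p : ℕ} {ι : Type*} [Finite ι] {G : ι → Type*} [∀ i, Group (G i)] :
    IsPGroup p (∀ i, G i) ↔ ∀ i, IsPGroup p (G i) := by
  refine ⟨fun h i => h.of_surjective (Pi.evalMonoidHom G i) (Function.surjective_eval i),
    fun h g => ?_⟩
  have := Fintype.ofFinite ι
  choose k hk using fun i => h i (g i)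
  refine ⟨∑ i, k i, funext fun i => ?_⟩
  obtain ⟨c, hc⟩ := pow_dvd_pow p (Finset.single_le_sum (fun j _ => (k j).zero_le)
    (Finset.mem_univ i))
  rw [Pi.pow_apply, hc, pow_mul, hk, one_pow, Pi.one_apply]

theorem isPGroup_multiplicative_zmod_iff {p n : ℕ} [Fact p.Prime] :
    IsPGroup p (Multiplicative (ZMod n)) ↔ ∃ k, n = p ^ k := by
  refine ⟨fun h => ?_, fun ⟨k, hk⟩ => IsPGroup.of_card (n := k) ?_⟩
  · obtain ⟨k, hk⟩ := IsPGroup.iff_orderOf.1 h (Multiplicative.ofAdd 1)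
    rw [orderOf_ofAdd_eq_addOrderOf, ZMod.addOrderOf_one] at hk
    exact ⟨k, hk⟩
  · rw [Nat.card_congr Multiplicative.toAdd, Nat.card_zmod, hk]

section Cover

open Subgroup
open scoped commutatorElement

variable {F G : Type*} [Group F] [Group G] (φ : F →* G)

def coverMap : F ⧸ ⁅φ.ker, (⊤ : Subgroup F)⁆ →* G :=
  QuotientGroup.lift _ φ (commutator_le_left _ _)

variable {φ} in
theorem coverMap_surjective (hφ : Function.Surjective φ) : Function.Surjective (coverMap φ) :=
  QuotientGroup.lift_surjective_of_surjective _ φ hφ _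

theorem ker_coverMap_le_center : (coverMap φ).ker ≤ center (F ⧸ ⁅φ.ker, (⊤ : Subgroup F)⁆) := by
  intro e he
  induction e using QuotientGroup.induction_on with | H x =>
  refine mem_center_iff.2 fun e => ?_
  induction e using QuotientGroup.induction_on with | H y =>
  have hxy : ⁅x, y⁆ ∈ ⁅φ.ker, (⊤ : Subgroup F)⁆ := commutator_mem_commutator he (mem_top y)
  exact (commutatorElement_eq_one_iff_commute.1 ((QuotientGroup.eq_one_iff _).2 hxy)).symm.eq

end Cover

theorem periodic_cover_isPGroup_iff_general {d : ℕ} (m : Fin d → ℕ)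
    {G : Type*} [Group G] [Finite G] (p : ℕ) (hp : p.Prime)
    (π : FreeProdCyclic m →* G) (hsurj : Function.Surjective π) :
    IsPGroup p (FreeProdCyclic m ⧸ ⁅π.ker, (⊤ : Subgroup (FreeProdCyclic m))⁆) ↔
      (IsPGroup p G ∧ ∀ i, ∃ k : ℕ, m i = p ^ k) := by
  have : Fact p.Prime := ⟨hp⟩
  have hab : IsPGroup p (Abelianization
      (FreeProdCyclic m ⧸ ⁅π.ker, (⊤ : Subgroup (FreeProdCyclic m))⁆)) ↔
      ∀ i, ∃ k : ℕ, m i = p ^ k := by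
    rw [MulEquiv.isPGroup_iff ((Abelianization.quotientEquivOfLeCommutator _
      (Subgroup.commutator_mono le_top le_top)).trans Monoid.CoprodI.abelianizationEquivPi),
      isPGroup_pi_iff]
    exact forall_congr' fun i => isPGroup_multiplicative_zmod_iff
  constructor
  · intro hE
    exact ⟨hE.of_surjective _ (coverMap_surjective hsurj),
      hab.1 (hE.of_surjective _ (QuotientGroup.mk'_surjective _))⟩
  · rintro ⟨hG, hperiods⟩
    exact IsPGroup.of_commutator_of_abelianization
      (hG.commutator_of_ker_le_center _ (coverMap_surjective hsurj) (ker_coverMap_le_center π))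
      (hab.2 hperiods)

theorem periodic_cover_isPGroup_iff {d : ℕ} (m : Fin d → ℕ) (hm : ∀ i, m i ≠ 0)
    {G : Type*} [Group G] [Finite G] (p : ℕ) (hp : p.Prime)
    (π : FreeProdCyclic m →* G) (hsurj : Function.Surjective π) :
    IsPGroup p (FreeProdCyclic m ⧸ ⁅π.ker, (⊤ : Subgroup (FreeProdCyclic m))⁆) ↔
      (IsPGroup p G ∧ ∀ i, ∃ k : ℕ, m i = p ^ k) :=
  periodic_cover_isPGroup_iff_general m p hp π hsurj
end

section
/- Universality of the Cayley periodic cover: let G be a finite group with Cayley periodic presentation 1 → R_u → F_u → G → 1 and E_u = F_u/[R_u,F_u], with induced projection π̄ : E_u → G. Then for every central extension 1 → A → Γ →p→ G → 1 (A central in Γ) and every section σ : G → Γ of p satisfying σ(g)^{o(g)} = 1 for all g ∈ G, there exists a unique group homomorphism φ : E_u → Γ with φ(f_g[R_u,F_u]) = σ(g) for all g ∈ G; moreover p∘φ = π̄. -/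
/-- The homomorphism from the cyclic group of order `orderOf g` (written multiplicatively)
to `G` sending the canonical generator to `g`. -/
noncomputable def cycHom {G : Type*} [Group G] (g : G) (hg : orderOf g ≠ 0) :
    Multiplicative (ZMod (orderOf g)) →* G where
  toFun x := g ^ (haveI : NeZero (orderOf g) := ⟨hg⟩; (Multiplicative.toAdd x).val)
  map_one' := by
    haveI : NeZero (orderOf g) := ⟨hg⟩
    show g ^ (Multiplicative.toAdd (1 : Multiplicative (ZMod (orderOf g)))).val = 1
    simp
  map_mul' x y := by
    haveI : NeZero (orderOf g) := ⟨hg⟩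
    show g ^ (Multiplicative.toAdd (x * y)).val = _ * _
    rw [← pow_add, pow_eq_pow_iff_modEq, toAdd_mul, ZMod.val_add]
    exact Nat.mod_modEq _ _

/-- The free product `F_u = ∗_{g ∈ G} ⟨f_g⟩` of cyclic groups of orders `o(g)`, `g ∈ G`,
underlying the Cayley periodic presentation of the finite group `G`. -/
abbrev CayleyFreeProd (G : Type*) [Group G] : Type _ :=
  FreeProdCyclic (fun g : G => orderOf g)

/-- The canonical projection `F_u → G` of the Cayley periodic presentation, `f_g ↦ g`. -/
noncomputable def cayleyProj (G : Type*) [Group G] [Finite G] : CayleyFreeProd G →* G :=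
  Monoid.CoprodI.lift (fun g : G => cycHom g (orderOf_pos g).ne')

/-- The cover `E_u = F_u/[R_u,F_u]` afforded by the Cayley periodic presentation. -/
abbrev CayleyCover (G : Type*) [Group G] [Finite G] : Type _ :=
  CayleyFreeProd G ⧸ ⁅(cayleyProj G).ker, (⊤ : Subgroup (CayleyFreeProd G))⁆

/-- The induced projection `π̄ : E_u = F_u/[R_u,F_u] → G`. -/
noncomputable def cayleyCoverProj (G : Type*) [Group G] [Finite G] : CayleyCover G →* G :=
  QuotientGroup.lift _ (cayleyProj G)
    (fun x hx => MonoidHom.mem_ker.mp (Subgroup.commutator_le_left _ _ hx))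

/-!
Since `F_u` is a free product of cyclic groups of orders `o(g)`, the condition `σ(g)^{o(g)} = 1`
is exactly what makes `f_g ↦ σ(g)` a homomorphism `ψ : F_u → Γ`; it lifts `F_u → G` along `p`.
So `ψ` maps `R_u` into `ker p`, which is central, hence kills `[R_u, F_u]` and descends to `E_u`.
Uniqueness and `p ∘ φ = π̄` hold because the classes of the `f_g` generate `E_u`.
-/

section CyclicLift

variable {Γ : Type*} [Group Γ]

def zmodHom (n : ℕ) (h : Γ) (hh : h ^ n = 1) : Multiplicative (ZMod n) →* Γ :=
  AddMonoidHom.toMultiplicativeLeft <|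
    ZMod.lift n ⟨zmultiplesHom (Additive Γ) (Additive.ofMul h), by
      simp only [zmultiplesHom_apply, natCast_zsmul, ← ofMul_pow, hh, ofMul_one]⟩

@[simp]
theorem zmodHom_ofAdd_one (n : ℕ) (h : Γ) (hh : h ^ n = 1) :
    zmodHom n h hh (Multiplicative.ofAdd 1) = h := by
  simp only [zmodHom, AddMonoidHom.coe_toMultiplicativeLeft, Function.comp_apply, toAdd_ofAdd]
  rw [← Int.cast_one, ZMod.lift_coe]
  simp

theorem MonoidHom.ext_mzmod {n : ℕ} {f f' : Multiplicative (ZMod n) →* Γ}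
    (h : f (Multiplicative.ofAdd 1) = f' (Multiplicative.ofAdd 1)) : f = f' := by
  refine MonoidHom.ext fun x => ?_
  obtain ⟨k, hk⟩ := ZMod.intCast_surjective (Multiplicative.toAdd x)
  have hx : x = Multiplicative.ofAdd (1 : ZMod n) ^ k := by
    rw [← ofAdd_zsmul, zsmul_one, hk, ofAdd_toAdd]
  rw [hx, map_zpow, map_zpow, h]

end CyclicLift

theorem cycHom_ofAdd_one {G : Type*} [Group G] (g : G) (hg : orderOf g ≠ 0) :
    cycHom g hg (Multiplicative.ofAdd 1) = g := by
  have : NeZero (orderOf g) := ⟨hg⟩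
  show g ^ (1 : ZMod (orderOf g)).val = g
  rw [ZMod.val_one_eq_one_mod, pow_mod_orderOf, pow_one]

namespace FreeProdCyclic

variable {ι : Type*} {m : ι → ℕ} {Γ : Type*} [Group Γ]

noncomputable def lift (x : ι → Γ) (hx : ∀ i, x i ^ m i = 1) : FreeProdCyclic m →* Γ :=
  Monoid.CoprodI.lift fun i => zmodHom (m i) (x i) (hx i)

@[simp]
theorem lift_cyclicGen (x : ι → Γ) (hx : ∀ i, x i ^ m i = 1) (i : ι) :
    lift x hx (cyclicGen m i) = x i := by
  rw [lift, cyclicGen, Monoid.CoprodI.lift_of, zmodHom_ofAdd_one]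

theorem hom_ext {f f' : FreeProdCyclic m →* Γ}
    (h : ∀ i, f (cyclicGen m i) = f' (cyclicGen m i)) : f = f' :=
  Monoid.CoprodI.ext_hom _ _ fun i => MonoidHom.ext_mzmod (h i)

theorem quotient_hom_ext {N : Subgroup (FreeProdCyclic m)} [N.Normal]
    {f f' : FreeProdCyclic m ⧸ N →* Γ}
    (h : ∀ i, f (QuotientGroup.mk' N (cyclicGen m i)) = f' (QuotientGroup.mk' N (cyclicGen m i))) :
    f = f' :=
  QuotientGroup.monoidHom_ext N (hom_ext h)

end FreeProdCyclic

@[simp]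
theorem cayleyProj_cyclicGen (G : Type*) [Group G] [Finite G] (g : G) :
    cayleyProj G (cyclicGen (fun g : G => orderOf g) g) = g := by
  rw [cayleyProj, cyclicGen, Monoid.CoprodI.lift_of, cycHom_ofAdd_one]

theorem cayleyCoverProj_mk (G : Type*) [Group G] [Finite G] (x : CayleyFreeProd G) :
    cayleyCoverProj G x = cayleyProj G x :=
  rfl

/-- `ψ` maps `ker π` into `ker p`, which is central. -/
theorem commutator_ker_le_ker_of_comp_eq {F G Γ : Type*} [Group F] [Group G] [Group Γ]
    {π : F →* G} {p : Γ →* G} (hcentral : p.ker ≤ Subgroup.center Γ) {ψ : F →* Γ}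
    (hψ : p.comp ψ = π) : ⁅π.ker, (⊤ : Subgroup F)⁆ ≤ ψ.ker := by
  rw [Subgroup.commutator_le]
  intro r hr f _
  have hψr : ψ r ∈ Subgroup.center Γ := hcentral <| by
    rwa [MonoidHom.mem_ker, ← MonoidHom.comp_apply, hψ]
  rw [MonoidHom.mem_ker, map_commutatorElement, commutatorElement_eq_one_iff_commute]
  exact (Subgroup.mem_center_iff.mp hψr (ψ f)).symm

theorem cayley_cover_universal_general (G : Type*) [Group G] [Finite G]
    (Γ : Type*) [Group Γ] (p : Γ →* G)
    (hcentral : p.ker ≤ Subgroup.center Γ)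
    (σ : G → Γ) (hsec : ∀ g : G, p (σ g) = g)
    (hord : ∀ g : G, σ g ^ orderOf g = 1) :
    (∃! φ : CayleyCover G →* Γ,
      ∀ g : G,
        φ (QuotientGroup.mk' ⁅(cayleyProj G).ker, (⊤ : Subgroup (CayleyFreeProd G))⁆
            (cyclicGen (fun g : G => orderOf g) g)) = σ g) ∧
    (∀ φ : CayleyCover G →* Γ,
      (∀ g : G,
        φ (QuotientGroup.mk' ⁅(cayleyProj G).ker, (⊤ : Subgroup (CayleyFreeProd G))⁆
            (cyclicGen (fun g : G => orderOf g) g)) = σ g) →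
      p.comp φ = cayleyCoverProj G) := by
  have hlift : p.comp (FreeProdCyclic.lift σ hord) = cayleyProj G :=
    FreeProdCyclic.hom_ext fun g => by simp [hsec]
  refine ⟨⟨QuotientGroup.lift _ _ (commutator_ker_le_ker_of_comp_eq hcentral hlift),
    fun g => FreeProdCyclic.lift_cyclicGen σ hord g,
    fun φ hφ => FreeProdCyclic.quotient_hom_ext fun g => ?_⟩,
    fun φ hφ => FreeProdCyclic.quotient_hom_ext fun g => ?_⟩
  · rw [hφ, QuotientGroup.mk'_apply, QuotientGroup.lift_mk, FreeProdCyclic.lift_cyclicGen]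
  · rw [MonoidHom.comp_apply, hφ, hsec, QuotientGroup.mk'_apply, cayleyCoverProj_mk,
      cayleyProj_cyclicGen]

theorem cayley_cover_universal (G : Type*) [Group G] [Finite G]
    (Γ : Type*) [Group Γ] (p : Γ →* G) (hsurj : Function.Surjective p)
    (hcentral : p.ker ≤ Subgroup.center Γ)
    (σ : G → Γ) (hsec : ∀ g : G, p (σ g) = g)
    (hord : ∀ g : G, σ g ^ orderOf g = 1) :
    (∃! φ : CayleyCover G →* Γ,
      ∀ g : G,
        φ (QuotientGroup.mk' ⁅(cayleyProj G).ker, (⊤ : Subgroup (CayleyFreeProd G))⁆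
            (cyclicGen (fun g : G => orderOf g) g)) = σ g) ∧
    (∀ φ : CayleyCover G →* Γ,
      (∀ g : G,
        φ (QuotientGroup.mk' ⁅(cayleyProj G).ker, (⊤ : Subgroup (CayleyFreeProd G))⁆
            (cyclicGen (fun g : G => orderOf g) g)) = σ g) →
      p.comp φ = cayleyCoverProj G) :=
  cayley_cover_universal_general G Γ p hcentral σ hsec hord
end

section
/- Let G be a finite group whose abelianization G/[G,G] is not cyclic, and let 1 → R → F → G → 1 be a periodic presentation of G. Then for every k ≥ 0 the subgroup [R,_{k+1}F] is properly contained in [R,_kF]; in particular [R,F] is a proper subgroup of R, the orders of the finite groups F/[R,_kF] strictly increase with k, and the profinite cover E_∞ = lim←_k F/[R,_kF] is an infinite profinite group. -/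
/-- Iterated commutator subgroups: `[R,₀F] = R` and `[R,_{k+1}F] = [[R,_kF],F]`. -/
def iterComm {F : Type*} [Group F] (R : Subgroup F) : ℕ → Subgroup F
  | 0 => R
  | k + 1 => ⁅iterComm R k, (⊤ : Subgroup F)⁆

instance iterComm_normal {F : Type*} [Group F] (R : Subgroup F) [hR : R.Normal] (k : ℕ) :
    (iterComm R k).Normal := by
  induction k with
  | zero => exact hR
  | succ k ih => exact @Subgroup.commutator_normal _ _ _ _ ih _

/-- The transition homomorphism `F/[R,_{k+1}F] →* F/[R,_kF]`. -/
def iterCommTrans {F : Type*} [Group F] (R : Subgroup F) [R.Normal] (k : ℕ) :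
    F ⧸ iterComm R (k + 1) →* F ⧸ iterComm R k :=
  QuotientGroup.map _ _ (MonoidHom.id F)
    (by simpa [iterComm] using Subgroup.commutator_le_left (iterComm R k) (⊤ : Subgroup F))

/-- The profinite cover `E_∞ = lim← F/[R,_kF]` associated to a presentation with kernel
`R`, realized as the subgroup of compatible families inside `∀ k, F/[R,_kF]`. -/
def profiniteCover {F : Type*} [Group F] (R : Subgroup F) [R.Normal] :
    Subgroup (∀ k : ℕ, F ⧸ iterComm R k) where
  carrier := {x | ∀ k, iterCommTrans R k (x (k + 1)) = x k}
  one_mem' := by intro k; simp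
  mul_mem' := by intro a b ha hb k; simp only [Pi.mul_apply, map_mul, ha k, hb k]
  inv_mem' := by intro a ha k; simp only [Pi.inv_apply, map_inv, ha k]

/-!
If the `m i` were pairwise coprime, the abelianization of every quotient of `F` would be a
quotient of `∏ i, ZMod (m i) ≅ ZMod (∏ i, m i)`, hence cyclic; so some prime `p` divides two
distinct orders `m i` and `m j`.

Each `S = [R,_kF]` has finite index: `S/[S,F]` is central of finite index in `F/[S,F]`, so by
Schur's theorem `F/[S,F]` has finite derived subgroup, and its abelianization is finite, being
generated by finitely many torsion elements.

If `[S,F] = S`, then `S` lies in every term of the lower central series of `F`, hence in the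
kernel of every homomorphism from `F` to a nilpotent group. Sending `f_i` to the shift `t` of the
`p`-group `ℤ/p^n ≀ ℤ/p` and `f_j` to a conjugate `a t a⁻¹` sends `f_j f_i⁻¹` to `⁅a, t⁆`, of order
divisible by `p^n`; with `n = [F : S] < p^n` this contradicts `S ≤ ker`.
-/

open scoped Function commutatorElement

namespace Monoid.CoprodI

variable {ι : Type*} {M : ι → Type*} [∀ i, Monoid (M i)]

theorem exists_surjective_pi_of_surjective [Fintype ι] {A : Type*} [CommMonoid A]
    {f : CoprodI M →* A} (hf : Function.Surjective f) :
    ∃ χ : (∀ i, M i) →* A, Function.Surjective χ := by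
  classical
  have hcomm : Pairwise fun k l => ∀ (x : M k) (y : M l), Commute (f (of x)) (f (of y)) :=
    fun _ _ _ _ _ => Commute.all _ _
  let χ := MonoidHom.noncommPiCoprod (fun k => f.comp (of (i := k))) hcomm
  have hfχ : f = χ.comp (lift fun i => MonoidHom.mulSingle M i) := by
    refine ext_hom _ _ fun i => MonoidHom.ext fun x => ?_
    simp only [χ, MonoidHom.comp_apply, lift_of, MonoidHom.mulSingle_apply,
      MonoidHom.noncommPiCoprod_mulSingle]
  exact ⟨χ, Function.Surjective.of_comp (hfχ ▸ hf)⟩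

theorem exists_hom_extending_pair {H : Type*} [Monoid H] {i j : ι} (hij : i ≠ j)
    (φ : M i →* H) (ψ : M j →* H) :
    ∃ Φ : CoprodI M →* H, Φ.comp of = φ ∧ Φ.comp of = ψ := by
  classical
  refine ⟨lift (Function.update (Function.update 1 i φ) j ψ), ?_, ?_⟩
  · rw [lift_comp_of, Function.update_of_ne hij, Function.update_self]
  · rw [lift_comp_of, Function.update_self]

end Monoid.CoprodI

theorem isCyclic_pi_multiplicative_zmod {ι : Type*} [Fintype ι] {m : ι → ℕ}
    (hm : Pairwise (Nat.Coprime on m)) : IsCyclic (∀ i, Multiplicative (ZMod (m i))) :=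
  let e := (ZMod.prodEquivPi m hm).toAddEquiv.toMultiplicative.trans
    (MulEquiv.piMultiplicative fun i => ZMod (m i))
  isCyclic_of_surjective e e.surjective

theorem exists_prime_dvd_of_not_pairwise_coprime {ι : Type*} {m : ι → ℕ}
    (hm : ¬ Pairwise (Nat.Coprime on m)) :
    ∃ p i j, p.Prime ∧ i ≠ j ∧ p ∣ m i ∧ p ∣ m j := by
  simp only [Pairwise, not_forall] at hm
  obtain ⟨i, j, hij, hcop⟩ := hm
  obtain ⟨p, hp, hpi, hpj⟩ := Nat.Prime.not_coprime_iff_dvd.mp hcop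
  exact ⟨p, i, j, hp, hij, hpi, hpj⟩

namespace Subgroup

variable {G : Type*} [Group G]

theorem commutatorElement_eq_of_mk_eq {a a' b b' : G} (ha : (a : G ⧸ center G) = a')
    (hb : (b : G ⧸ center G) = b') : ⁅a, b⁆ = ⁅a', b'⁆ := by
  obtain ⟨z, hz, rfl⟩ : ∃ z ∈ center G, a' = a * z :=
    ⟨a⁻¹ * a', QuotientGroup.eq.mp ha, by group⟩
  obtain ⟨w, hw, rfl⟩ : ∃ w ∈ center G, b' = b * w :=
    ⟨b⁻¹ * b', QuotientGroup.eq.mp hb, by group⟩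
  have hz' := mem_center_iff.mp hz
  have hw' := mem_center_iff.mp hw
  have hconj : (a * z) * (b * w) * (a * z)⁻¹ = a * (b * w) * a⁻¹ := by
    rw [mul_assoc a z, ← hz' (b * w)]; group
  have hcancel : a * (b * w) * a⁻¹ * (b * w)⁻¹ = a * b * a⁻¹ * b⁻¹ := by
    rw [show a * (b * w) * a⁻¹ * (b * w)⁻¹ = a * b * (w * a⁻¹) * w⁻¹ * b⁻¹ by group, ← hw' a⁻¹]
    group
  rw [commutatorElement_def, commutatorElement_def, hconj, hcancel]

theorem finite_commutatorSet_of_finiteIndex_center [(center G).FiniteIndex] :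
    Finite (commutatorSet G) := by
  refine Set.Finite.to_subtype <| (Set.finite_range
    fun q : (G ⧸ center G) × (G ⧸ center G) => ⁅q.1.out, q.2.out⁆).subset ?_
  rintro _ ⟨a, b, rfl⟩
  exact ⟨(a, b), (commutatorElement_eq_of_mk_eq (QuotientGroup.out_eq' _).symm
    (QuotientGroup.out_eq' _).symm).symm⟩

theorem finite_of_finiteIndex_center [(center G).FiniteIndex] [hab : Finite (Abelianization G)] :
    Finite G := by
  have := finite_commutatorSet_of_finiteIndex_center (G := G)
  have : Finite (G ⧸ _root_.commutator G) := hab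
  exact Finite.of_subgroup_quotient (_root_.commutator G)

theorem finiteIndex_center_quotient_commutator_top (S : Subgroup G) [S.Normal] [S.FiniteIndex] :
    (center (G ⧸ ⁅S, (⊤ : Subgroup _)⁆)).FiniteIndex := by
  have hcentral :
      S.map (QuotientGroup.mk' ⁅S, (⊤ : Subgroup _)⁆) ≤ center (G ⧸ ⁅S, (⊤ : Subgroup _)⁆) := by
    rintro _ ⟨x, hx, rfl⟩
    refine mem_center_iff.mpr fun g => ?_
    obtain ⟨y, rfl⟩ := QuotientGroup.mk_surjective g
    refine QuotientGroup.eq.mpr ?_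
    rw [show (y * x)⁻¹ * (x * y) = ⁅x⁻¹, y⁻¹⁆ by group]
    exact commutator_mem_commutator (inv_mem hx) (mem_top _)
  have : (S.map (QuotientGroup.mk' ⁅S, (⊤ : Subgroup _)⁆)).FiniteIndex := by
    refine ⟨?_⟩
    rw [S.index_map_eq (QuotientGroup.mk'_surjective _)
      (by rw [QuotientGroup.ker_mk']; exact commutator_le_left S ⊤)]
    exact FiniteIndex.index_ne_zero
  exact finiteIndex_of_le hcentral

end Subgroup

section FreeProdCyclic

variable {ι : Type*} [Fintype ι] {m : ι → ℕ}

theorem finite_abelianization_of_surjective (hm : ∀ i, m i ≠ 0) {Q : Type*} [Group Q]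
    {f : FreeProdCyclic m →* Q} (hf : Function.Surjective f) : Finite (Abelianization Q) := by
  have : ∀ i, NeZero (m i) := fun i => ⟨hm i⟩
  obtain ⟨χ, hχ⟩ := Monoid.CoprodI.exists_surjective_pi_of_surjective
    (f := Abelianization.of.comp f) ((QuotientGroup.mk_surjective (s := commutator _)).comp hf)
  exact Finite.of_surjective χ hχ

theorem isCyclic_abelianization_of_pairwise_coprime (hm : Pairwise (Nat.Coprime on m))
    {G : Type*} [Group G] {f : FreeProdCyclic m →* G} (hf : Function.Surjective f) :
    IsCyclic (Abelianization G) := by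
  have := isCyclic_pi_multiplicative_zmod hm
  obtain ⟨χ, hχ⟩ := Monoid.CoprodI.exists_surjective_pi_of_surjective
    (f := Abelianization.of.comp f) ((QuotientGroup.mk_surjective (s := commutator _)).comp hf)
  exact isCyclic_of_surjective χ hχ

theorem finite_quotient_commutator_top (hm : ∀ i, m i ≠ 0)
    (S : Subgroup (FreeProdCyclic m)) [S.Normal] [Finite (FreeProdCyclic m ⧸ S)] :
    Finite (FreeProdCyclic m ⧸ ⁅S, (⊤ : Subgroup _)⁆) := by
  have := S.finiteIndex_of_finite_quotient
  have := S.finiteIndex_center_quotient_commutator_top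
  have := finite_abelianization_of_surjective hm (QuotientGroup.mk'_surjective ⁅S, ⊤⁆)
  exact Subgroup.finite_of_finiteIndex_center

end FreeProdCyclic

theorem Subgroup.le_ker_of_commutator_top_eq_self {F N : Type*} [Group F] [Group N]
    [Group.IsNilpotent N] {S : Subgroup F} (hS : ⁅S, ⊤⁆ = S) (Φ : F →* N) : S ≤ Φ.ker := by
  have hlcs : ∀ c, S ≤ (⊤ : Subgroup F).lowerCentralSeries c := by
    intro c
    induction c with
    | zero => exact le_top
    | succ c ih => rw [← hS]; exact commutator_mono ih le_top
  intro x hx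
  have hmap : Φ x ∈ ((⊤ : Subgroup F).map Φ).lowerCentralSeries (Group.nilpotencyClass N) := by
    rw [← map_lowerCentralSeries]
    exact mem_map_of_mem Φ (hlcs _ hx)
  replace hmap : Φ x ∈ (⊤ : Subgroup N).lowerCentralSeries _ :=
    lowerCentralSeries_mono _ le_top hmap
  rwa [lowerCentralSeries_nilpotencyClass, mem_bot] at hmap

theorem MonoidHom.orderOf_le_index_of_le_ker {F N : Type*} [Group F] [Group N] {S : Subgroup F}
    [S.FiniteIndex] {Φ : F →* N} (h : S ≤ Φ.ker) (x : F) : orderOf (Φ x) ≤ S.index := by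
  refine Nat.le_of_dvd (Nat.pos_of_ne_zero Subgroup.FiniteIndex.index_ne_zero) ?_
  calc orderOf (Φ x) = orderOf (Φ.rangeRestrict x) := Subgroup.orderOf_coe (Φ.rangeRestrict x)
    _ ∣ Nat.card Φ.range := orderOf_dvd_natCard _
    _ = Φ.ker.index := (Subgroup.index_ker Φ).symm
    _ ∣ S.index := Subgroup.index_dvd_of_le h

namespace RegularWreathProduct

variable {D Q : Type*} [Group D] [Group Q]

theorem pow_left_of_right_eq_one {x : D ≀ᵣ Q} (hx : x.right = 1) (k : ℕ) :
    (x ^ k).left = x.left ^ k := by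
  induction k with
  | zero => rw [pow_zero, pow_zero, one_left]
  | succ k ih =>
    ext y
    simp [pow_succ', hx, ih]

theorem orderOf_left_apply_dvd {x : D ≀ᵣ Q} (hx : x.right = 1) (q : Q) :
    orderOf (x.left q) ∣ orderOf x :=
  orderOf_dvd_of_pow_eq_one <| by
    rw [← Pi.pow_apply, ← pow_left_of_right_eq_one hx, pow_orderOf_eq_one, one_left,
      Pi.one_apply]

theorem orderOf_dvd_orderOf_commutatorElement_mulSingle_inl [DecidableEq Q] {q : Q} (hq : q ≠ 1)
    (d : D) : orderOf d ∣ orderOf ⁅(⟨Pi.mulSingle 1 d, 1⟩ : D ≀ᵣ Q), (inl q : D ≀ᵣ Q)⁆ := by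
  have hright : ⁅(⟨Pi.mulSingle 1 d, 1⟩ : D ≀ᵣ Q), (inl q : D ≀ᵣ Q)⁆.right = 1 := by
    simp [commutatorElement_def]
  have hleft : ⁅(⟨Pi.mulSingle 1 d, 1⟩ : D ≀ᵣ Q), (inl q : D ≀ᵣ Q)⁆.left 1 = d := by
    simp [commutatorElement_def, hq]
  simpa only [hleft] using orderOf_left_apply_dvd hright 1

variable (p n : ℕ) [Fact p.Prime]

instance isNilpotent_zmod_wreath_zmod :
    Group.IsNilpotent (Multiplicative (ZMod (p ^ n)) ≀ᵣ Multiplicative (ZMod p)) := by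
  have : NeZero p := ⟨(Fact.out : p.Prime).ne_zero⟩
  refine (IsPGroup.of_card (p := p) (n := n * p + 1) ?_).isNilpotent
  simp [card, pow_succ, pow_mul]

end RegularWreathProduct

theorem commutator_top_ne_self_of_prime_dvd {ι : Type*} {m : ι → ℕ} {p : ℕ} (hp : p.Prime)
    {i j : ι} (hij : i ≠ j) (hpi : p ∣ m i) (hpj : p ∣ m j) (S : Subgroup (FreeProdCyclic m))
    [S.FiniteIndex] : ⁅S, ⊤⁆ ≠ S := by
  intro hS
  have := Fact.mk hp
  let W := Multiplicative (ZMod (p ^ S.index)) ≀ᵣ Multiplicative (ZMod p)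
  let a : W := ⟨Pi.mulSingle 1 (Multiplicative.ofAdd 1), 1⟩
  let t : Multiplicative (ZMod p) →* W := RegularWreathProduct.inl
  let reduce (k : ι) (h : p ∣ m k) : Multiplicative (ZMod (m k)) →* Multiplicative (ZMod p) :=
    AddMonoidHom.toMultiplicative (ZMod.castHom h (ZMod p)).toAddMonoidHom
  obtain ⟨Φ, hΦi, hΦj⟩ := Monoid.CoprodI.exists_hom_extending_pair
    (M := fun k => Multiplicative (ZMod (m k))) hij (t.comp (reduce i hpi))
    ((MulAut.conj a).toMonoidHom.comp (t.comp (reduce j hpj)))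
  have hq : Multiplicative.ofAdd (1 : ZMod p) ≠ 1 := ofAdd_eq_one.not.mpr one_ne_zero
  have hw : Φ (cyclicGen m j * (cyclicGen m i)⁻¹) = ⁅a, t (Multiplicative.ofAdd 1)⁆ := by
    rw [map_mul, map_inv, cyclicGen, cyclicGen, ← MonoidHom.comp_apply Φ,
      ← MonoidHom.comp_apply Φ, hΦi, hΦj]
    simp [reduce, commutatorElement_def, ZMod.cast_one hpi, ZMod.cast_one hpj]
  have hle := MonoidHom.orderOf_le_index_of_le_ker (S.le_ker_of_commutator_top_eq_self hS Φ)
    (cyclicGen m j * (cyclicGen m i)⁻¹)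
  rw [hw] at hle
  have hdvd := RegularWreathProduct.orderOf_dvd_orderOf_commutatorElement_mulSingle_inl
    (D := Multiplicative (ZMod (p ^ S.index))) hq (Multiplicative.ofAdd 1)
  rw [orderOf_ofAdd_eq_addOrderOf, ZMod.addOrderOf_one] at hdvd
  exact (Nat.lt_pow_self hp.one_lt).not_ge ((Nat.le_of_dvd (orderOf_pos _) hdvd).trans hle)

namespace profiniteCover

variable {F : Type*} [Group F] (R : Subgroup F) [R.Normal]

theorem surjective_eval (k : ℕ) : Function.Surjective fun x : profiniteCover R => x.1 k := by
  intro y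
  obtain ⟨g, rfl⟩ := QuotientGroup.mk_surjective y
  exact ⟨⟨fun _ => g, fun _ => rfl⟩, rfl⟩

theorem infinite_of_strictMono (h : StrictMono fun k => Nat.card (F ⧸ iterComm R k)) :
    Infinite (profiniteCover R) := by
  refine not_finite_iff_infinite.mp fun hfin => ?_
  set N := Nat.card (profiniteCover R)
  have hle := Nat.card_le_card_of_surjective _ (surjective_eval R (N + 1))
  exact Nat.not_succ_le_self N ((h.id_le (N + 1)).trans hle)

end profiniteCover

theorem profinite_cover_infinite {d : ℕ} (m : Fin d → ℕ) (hm : ∀ i, m i ≠ 0)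
    {G : Type*} [Group G] [Finite G] (hnc : ¬ IsCyclic (Abelianization G))
    (π : FreeProdCyclic m →* G) (hsurj : Function.Surjective π) :
    (∀ k : ℕ, iterComm π.ker (k + 1) < iterComm π.ker k) ∧
    ⁅π.ker, (⊤ : Subgroup (FreeProdCyclic m))⁆ < π.ker ∧
    (∀ k : ℕ, Finite (FreeProdCyclic m ⧸ iterComm π.ker k)) ∧
    (∀ k : ℕ, Nat.card (FreeProdCyclic m ⧸ iterComm π.ker k) <
      Nat.card (FreeProdCyclic m ⧸ iterComm π.ker (k + 1))) ∧
    Infinite (profiniteCover π.ker) := by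
  obtain ⟨p, i, j, hp, hij, hpi, hpj⟩ := exists_prime_dvd_of_not_pairwise_coprime
    fun hcop => hnc (isCyclic_abelianization_of_pairwise_coprime hcop hsurj)
  have hfin : ∀ k, Finite (FreeProdCyclic m ⧸ iterComm π.ker k) := by
    intro k
    induction k with
    | zero => exact .of_equiv G (QuotientGroup.quotientKerEquivOfSurjective π hsurj).symm.toEquiv
    | succ k ih => exact finite_quotient_commutator_top hm (iterComm π.ker k)
  have hstrict : ∀ k, iterComm π.ker (k + 1) < iterComm π.ker k := fun k =>
    have := (iterComm π.ker k).finiteIndex_of_finite_quotient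
    lt_of_le_of_ne (Subgroup.commutator_le_left _ _)
      (commutator_top_ne_self_of_prime_dvd hp hij hpi hpj (iterComm π.ker k))
  have hcard : ∀ k, Nat.card (FreeProdCyclic m ⧸ iterComm π.ker k) <
      Nat.card (FreeProdCyclic m ⧸ iterComm π.ker (k + 1)) := fun k => by
    have := (iterComm π.ker (k + 1)).finiteIndex_of_finite_quotient
    simpa only [Subgroup.index_eq_card] using Subgroup.index_strictAnti (hstrict k)
  exact ⟨hstrict, hstrict 0, hfin, hcard,
    profiniteCover.infinite_of_strictMono _ (strictMono_nat_of_lt_succ hcard)⟩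
end

section
/- Existence of smooth covers: let G be a finite group generated by g₁, …, g_d with m_i = o(g_i). Let F = ⟨f₁⟩ ∗ ⋯ ∗ ⟨f_d⟩ with f_i of order m_i, π : F → G defined by f_i ↦ g_i, R = ker π, and E = F/[R,F]. Let F̃ = ∗_{i=1,…,d; j=1,…,m_i} ⟨f_{i,j}⟩ with each ⟨f_{i,j}⟩ cyclic of order m_i, and π̃ : F̃ → G defined by f_{i,j} ↦ g_i. Let f_* = f_{1,1}⋯f_{1,m₁}·f_{2,1}⋯f_{2,m₂}⋯f_{d,1}⋯f_{d,m_d}, let Δ̃ = F̃/⟨f_*⟩^{F̃} (quotient by the normal closure of f_*, which lies in ker π̃), let S̃ be the kernel of the induced surjection Δ̃ → G, and let D̃ = Δ̃/[S̃,Δ̃]. Then there is a surjective group homomorphism D̃ → E carrying the class of f_{i,j} to the class of f_i and commuting with the projections onto G. -/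
theorem cycHom_pow_order {G : Type*} [Group G] (g : G) (hg : orderOf g ≠ 0)
    (x : Multiplicative (ZMod (orderOf g))) : (cycHom g hg x) ^ orderOf g = 1 := by
  show (g ^ _) ^ orderOf g = 1
  rw [← pow_mul, mul_comm, pow_mul, pow_orderOf_eq_one, one_pow]

namespace SmoothCover

variable {d : ℕ} {G : Type*} [Group G] [Finite G] (g : Fin d → G)

/-- `F = ⟨f₁⟩ ∗ ⋯ ∗ ⟨f_d⟩` with `fᵢ` of order `mᵢ = o(gᵢ)`. -/
abbrev F (g : Fin d → G) : Type _ := FreeProdCyclic (fun i : Fin d => orderOf (g i))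

/-- The projection `π : F → G`, `fᵢ ↦ gᵢ`. -/
noncomputable def proj : F g →* G :=
  Monoid.CoprodI.lift (fun i : Fin d => cycHom (g i) (orderOf_pos (g i)).ne')

/-- The locally unitary cover `E = F/[R,F]`, `R = ker π`. -/
abbrev E : Type _ := F g ⧸ ⁅(proj g).ker, (⊤ : Subgroup (F g))⁆

/-- The index set of the cloned generators `f_{i,j}`, `1 ≤ j ≤ mᵢ`. -/
abbrev CloneIdx (g : Fin d → G) : Type _ := (i : Fin d) × Fin (orderOf (g i))

/-- The cloned free product `F̃ = ∗_{i,j} ⟨f_{i,j}⟩`, `f_{i,j}` of order `mᵢ`. -/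
abbrev TildeF (g : Fin d → G) : Type _ :=
  FreeProdCyclic (fun x : CloneIdx g => orderOf (g x.1))

/-- The projection `π̃ : F̃ → G`, `f_{i,j} ↦ gᵢ`. -/
noncomputable def tildeProj : TildeF g →* G :=
  Monoid.CoprodI.lift (fun x : CloneIdx g => cycHom (g x.1) (orderOf_pos (g x.1)).ne')

/-- The element `f_* = f_{1,1}⋯f_{1,m₁}·f_{2,1}⋯f_{2,m₂}⋯f_{d,1}⋯f_{d,m_d}` of `F̃`. -/
noncomputable def fstar (g : Fin d → G) : TildeF g :=
  ((List.finRange d).map (fun i : Fin d =>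
    ((List.finRange (orderOf (g i))).map (fun j =>
      cyclicGen (fun x : CloneIdx g => orderOf (g x.1)) ⟨i, j⟩)).prod)).prod

theorem tildeProj_fstar : tildeProj g (fstar g) = 1 := by
  rw [fstar, map_list_prod, List.map_map]
  refine List.prod_eq_one ?_
  intro x hx
  simp only [List.mem_map, Function.comp] at hx
  obtain ⟨i, -, rfl⟩ := hx
  have key : ∀ L : List (Fin (orderOf (g i))),
      tildeProj g ((L.map (fun j =>
          cyclicGen (fun x : CloneIdx g => orderOf (g x.1)) ⟨i, j⟩)).prod) =
        (cycHom (g i) (orderOf_pos (g i)).ne' (Multiplicative.ofAdd 1)) ^ L.length := by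
    intro L
    induction L with
    | nil => simp
    | cons a L ih =>
        rw [List.map_cons, List.prod_cons, map_mul, ih, List.length_cons]
        have h1 : tildeProj g (cyclicGen (fun x : CloneIdx g => orderOf (g x.1)) ⟨i, a⟩) =
            cycHom (g i) (orderOf_pos (g i)).ne' (Multiplicative.ofAdd 1) := by
          simp [tildeProj, cyclicGen, Monoid.CoprodI.lift_of]
        rw [h1, ← pow_succ']
  rw [key, List.length_finRange]
  exact cycHom_pow_order _ _ _

/-- `Δ̃ = F̃ / ⟨f_*⟩^{F̃}`, the quotient by the normal closure of `f_*`. -/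
abbrev TildeDelta (g : Fin d → G) : Type _ := TildeF g ⧸ Subgroup.normalClosure {fstar g}

/-- The induced projection `Δ̃ → G` (well defined since `f_* ∈ ker π̃`). -/
noncomputable def deltaProj : TildeDelta g →* G :=
  QuotientGroup.lift _ (tildeProj g)
    (fun x hx => MonoidHom.mem_ker.mp
      (Subgroup.normalClosure_le_normal
        (by simpa using MonoidHom.mem_ker.mpr (tildeProj_fstar g)) hx))

/-- The smooth central extension `D̃ = Δ̃/[S̃,Δ̃]`, `S̃ = ker(Δ̃ → G)`. -/
abbrev TildeD (g : Fin d → G) : Type _ :=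
  TildeDelta g ⧸ ⁅(deltaProj g).ker, (⊤ : Subgroup (TildeDelta g))⁆

/-- The projection `E → G`. -/
noncomputable def coverProjE : E g →* G :=
  QuotientGroup.lift _ (proj g)
    (fun x hx => MonoidHom.mem_ker.mp (Subgroup.commutator_le_left _ _ hx))

/-- The projection `D̃ → G`. -/
noncomputable def coverProjD : TildeD g →* G :=
  QuotientGroup.lift _ (deltaProj g)
    (fun x hx => MonoidHom.mem_ker.mp (Subgroup.commutator_le_left _ _ hx))

end SmoothCover

/-!
Folding every clone `f_{i,j}` onto `fᵢ` defines `F̃ → F` over `G`; it is onto, and it kills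
`f_*`, whose `i`-th block folds to `fᵢ ^ mᵢ = 1`. So it descends to a surjection `Δ̃ → F` over
`G`, which maps `S̃` into `R` and hence `[S̃, Δ̃]` into `[R, F]`.
-/

theorem cyclicGen_pow_self {ι : Type*} (m : ι → ℕ) (i : ι) : cyclicGen m i ^ m i = 1 := by
  rw [cyclicGen, ← map_pow, ← ofAdd_nsmul, nsmul_one, ZMod.natCast_self, ofAdd_zero, map_one]

namespace Monoid.CoprodI

variable {ι κ : Type*} {M : ι → Type*} [∀ i, Monoid (M i)]

def fold (σ : κ → ι) : CoprodI (fun k => M (σ k)) →* CoprodI M :=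
  lift fun k => of (i := σ k)

theorem fold_of (σ : κ → ι) (k : κ) (x : M (σ k)) : fold σ (of x) = of (M := M) x :=
  lift_of _ _

theorem fold_surjective {σ : κ → ι} (hσ : Function.Surjective σ) :
    Function.Surjective (fold (M := M) σ) := by
  intro w
  induction w using induction_on with
  | one => exact ⟨1, map_one _⟩
  | of i x =>
    obtain ⟨k, rfl⟩ := hσ i
    exact ⟨of x, fold_of σ k x⟩
  | mul x y hx hy =>
    obtain ⟨a, rfl⟩ := hx
    obtain ⟨b, rfl⟩ := hy
    exact ⟨a * b, map_mul _ _ _⟩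

end Monoid.CoprodI

theorem fold_cyclicGen {ι κ : Type*} (m : ι → ℕ) (σ : κ → ι) (k : κ) :
    Monoid.CoprodI.fold σ (cyclicGen (fun k => m (σ k)) k) = cyclicGen m (σ k) :=
  Monoid.CoprodI.fold_of _ _ _

section CommutatorKernel

variable {A B Q : Type*} [Group A] [Group B] [Group Q]

theorem Subgroup.commutator_ker_le_comap {p : A →* Q} {q : B →* Q} {φ : A →* B}
    (h : q.comp φ = p) : ⁅p.ker, (⊤ : Subgroup A)⁆ ≤ ⁅q.ker, (⊤ : Subgroup B)⁆.comap φ := by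
  rw [← Subgroup.map_le_iff_le_comap, Subgroup.map_commutator]
  refine Subgroup.commutator_mono ?_ le_top
  rintro _ ⟨a, ha, rfl⟩
  rwa [MonoidHom.mem_ker, ← MonoidHom.comp_apply, h]

def kerCommutatorMap (p : A →* Q) (q : B →* Q) (φ : A →* B) (h : q.comp φ = p) :
    A ⧸ ⁅p.ker, (⊤ : Subgroup A)⁆ →* B ⧸ ⁅q.ker, (⊤ : Subgroup B)⁆ :=
  QuotientGroup.map _ _ φ (Subgroup.commutator_ker_le_comap h)

variable {p : A →* Q} {q : B →* Q} {φ : A →* B} (h : q.comp φ = p)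

theorem kerCommutatorMap_surjective (hφ : Function.Surjective φ) :
    Function.Surjective (kerCommutatorMap p q φ h) :=
  QuotientGroup.map_surjective_of_surjective _ _ _ ((QuotientGroup.mk'_surjective _).comp hφ) _

theorem lift_comp_kerCommutatorMap (hp : ⁅p.ker, (⊤ : Subgroup A)⁆ ≤ p.ker)
    (hq : ⁅q.ker, (⊤ : Subgroup B)⁆ ≤ q.ker) :
    (QuotientGroup.lift _ q hq).comp (kerCommutatorMap p q φ h) = QuotientGroup.lift _ p hp :=
  QuotientGroup.monoidHom_ext _ (MonoidHom.ext (DFunLike.congr_fun h))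

end CommutatorKernel

namespace SmoothCover

variable {d : ℕ} {G : Type*} [Group G] (g : Fin d → G)

noncomputable abbrev fold : TildeF g →* F g :=
  Monoid.CoprodI.fold (M := fun i : Fin d => Multiplicative (ZMod (orderOf (g i)))) Sigma.fst

theorem fold_fstar : fold g (fstar g) = 1 := by
  rw [fstar, map_list_prod, List.map_map]
  refine List.prod_eq_one fun w hw => ?_
  obtain ⟨i, -, rfl⟩ := List.mem_map.mp hw
  rw [Function.comp_apply, map_list_prod, List.map_map]
  simp only [Function.comp_def, fold_cyclicGen, List.map_const', List.prod_replicate,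
    List.length_finRange, cyclicGen_pow_self]

noncomputable def foldDelta : TildeDelta g →* F g :=
  QuotientGroup.lift _ (fold g)
    (Subgroup.normalClosure_le_normal (Set.singleton_subset_iff.mpr (fold_fstar g)))

end SmoothCover

namespace SmoothCover

variable {d : ℕ} {G : Type*} [Group G] [Finite G] (g : Fin d → G)

theorem proj_comp_fold : (proj g).comp (fold g) = tildeProj g :=
  Monoid.CoprodI.ext_hom _ _ fun _ => rfl

theorem proj_comp_foldDelta : (proj g).comp (foldDelta g) = deltaProj g :=
  QuotientGroup.monoidHom_ext _ (proj_comp_fold g)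

theorem foldDelta_surjective : Function.Surjective (foldDelta g) :=
  QuotientGroup.lift_surjective_of_surjective _ _
    (Monoid.CoprodI.fold_surjective fun i => ⟨⟨i, ⟨0, orderOf_pos (g i)⟩⟩, rfl⟩) _

theorem exists_smooth_cover_projection :
    ∃ ψ : TildeD g →* E g,
      Function.Surjective ψ ∧
      (∀ x : CloneIdx g,
        ψ (QuotientGroup.mk' ⁅(deltaProj g).ker, (⊤ : Subgroup (TildeDelta g))⁆
            (QuotientGroup.mk' (Subgroup.normalClosure {fstar g})
              (cyclicGen (fun x : CloneIdx g => orderOf (g x.1)) x))) =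
          QuotientGroup.mk' ⁅(proj g).ker, (⊤ : Subgroup (F g))⁆
            (cyclicGen (fun i : Fin d => orderOf (g i)) x.1)) ∧
      (coverProjE g).comp ψ = coverProjD g :=
  ⟨kerCommutatorMap _ _ _ (proj_comp_foldDelta g),
    kerCommutatorMap_surjective _ (foldDelta_surjective g),
    fun x => congrArg _ (fold_cyclicGen _ Sigma.fst x),
    lift_comp_kerCommutatorMap _ _ _⟩

end SmoothCover
end

section
/- Let 1 → A → E →π→ G → 1 be a finite central extension of a finite group G, let σ : G → E be a section of π with associated cocycle γ (σ(g)σ(h) = σ(gh)γ(g,h)), and let η̇ : Hom(A,ℂˣ) → Z²(G,ℂˣ) be the homomorphism λ ↦ λ∘γ. Set S = η̇(Hom(A,ℂˣ)), a finite subgroup of Z²(G,ℂˣ). Then the subgroup ⟨σ(g) : g ∈ G⟩ of E is isomorphic to the Schur construction Š ∝ G; explicitly, the assignment σ(g)·∏_i γ(g_i,h_i) ↦ (g, ∏_i ω(g_i,h_i)) is a well-defined group isomorphism. -/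
/-- The 2-cocycle condition (for the trivial action) on a map `G → G → ℂˣ`. -/
def IsCocycle {G : Type*} [Group G] (α : G → G → ℂˣ) : Prop :=
  ∀ x y z : G, α x y * α (x * y) z = α x (y * z) * α y z

/-- The group `Z²(G,ℂˣ)` of 2-cocycles of `G` with values in `ℂˣ` (trivial action). -/
def Z2 (G : Type*) [Group G] : Subgroup (G → G → ℂˣ) where
  carrier := {α | IsCocycle α}
  one_mem' := by intro x y z; simp
  mul_mem' := by
    intro a b ha hb x y z
    simp only [Pi.mul_apply]
    rw [mul_mul_mul_comm, ha x y z, hb x y z, mul_mul_mul_comm]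
  inv_mem' := by
    intro a ha x y z
    simp only [Pi.inv_apply, ← mul_inv]
    rw [ha x y z]

section
variable {M : Type*} [CommGroup M]
private theorem helper1 (X Y a b c : M) : X * (Y * a * b) * c = (Y * X) * (a * b * c) := by
  simp [mul_comm, mul_left_comm, mul_assoc]
private theorem helper2 (X Z a b c : M) : (X * Z) * (a * b * c) = X * a * (Z * b * c) := by
  simp [mul_comm, mul_left_comm, mul_assoc]
private theorem helper3 (X Y z : M) : X * (X⁻¹ * Y⁻¹ * z⁻¹) * z = Y⁻¹ := by
  simp [mul_comm, mul_left_comm, mul_assoc]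
end

section Schur

variable {G : Type*} [Group G] (S : Subgroup (G → G → ℂˣ))

/-- The evaluation character `ω(g,h) : α ↦ α(g,h)` on a subgroup `S ≤ Z²(G,ℂˣ)`. -/
def omegaChar (g h : G) : S →* ℂˣ where
  toFun α := (α : G → G → ℂˣ) g h
  map_one' := rfl
  map_mul' _ _ := rfl

/-- The underlying type of the Schur construction `Š ∝ G`: pairs `(g, θ)` with `g ∈ G` and
`θ ∈ Š = Hom(S, ℂˣ)`, multiplied by the rule `(g,θ)(h,ψ) = (gh, ω(g,h)θψ)`. -/
def SchurC (hS : ∀ α ∈ S, IsCocycle α) : Type _ := G × (S →* ℂˣ)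

namespace SchurC

variable {S}

/-- Build an element of the Schur construction. -/
def mk (hS : ∀ α ∈ S, IsCocycle α) (g : G) (θ : S →* ℂˣ) : SchurC S hS := (g, θ)

variable {hS : ∀ α ∈ S, IsCocycle α}

/-- First (group) component of an element of the Schur construction. -/
def fst (x : SchurC S hS) : G := x.1

/-- Second (character) component of an element of the Schur construction. -/
def snd (x : SchurC S hS) : S →* ℂˣ := x.2

private theorem omega_cocycle (hS : ∀ α ∈ S, IsCocycle α) (x y z : G) :
    omegaChar S x y * omegaChar S (x * y) z = omegaChar S x (y * z) * omegaChar S y z := by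
  ext α
  exact congrArg Units.val (hS α α.2 x y z)

private theorem omega_one_left (hS : ∀ α ∈ S, IsCocycle α) (h : G) :
    omegaChar S 1 h = omegaChar S 1 1 := by
  ext α
  have := hS α α.2 1 1 h
  simp only [one_mul] at this
  exact congrArg Units.val (mul_right_cancel this.symm)

private theorem omega_one_right (hS : ∀ α ∈ S, IsCocycle α) (g : G) :
    omegaChar S g 1 = omegaChar S 1 1 := by
  ext α
  have := hS α α.2 g 1 1
  simp only [mul_one, one_mul] at this
  exact congrArg Units.val (mul_left_cancel this)

private theorem omega_inv (hS : ∀ α ∈ S, IsCocycle α) (g : G) :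
    omegaChar S g g⁻¹ = omegaChar S g⁻¹ g := by
  ext α
  have := hS α α.2 g g⁻¹ g
  simp only [mul_inv_cancel, inv_mul_cancel] at this
  have h1 : (α : G → G → ℂˣ) 1 g = (α : G → G → ℂˣ) 1 1 :=
    congrArg (fun f : S →* ℂˣ => f α) (omega_one_left hS g)
  have h2 : (α : G → G → ℂˣ) g 1 = (α : G → G → ℂˣ) 1 1 :=
    congrArg (fun f : S →* ℂˣ => f α) (omega_one_right hS g)
  rw [h1, h2] at this
  exact congrArg Units.val (mul_left_cancel ((mul_comm _ _).trans this))

instance : Mul (SchurC S hS) :=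
  ⟨fun x y => (x.1 * y.1, omegaChar S x.1 y.1 * x.2 * y.2)⟩

instance : One (SchurC S hS) := ⟨(1, (omegaChar S 1 1)⁻¹)⟩

instance : Inv (SchurC S hS) :=
  ⟨fun x => (x.1⁻¹, (omegaChar S x.1 x.1⁻¹)⁻¹ * (omegaChar S 1 1)⁻¹ * x.2⁻¹)⟩

instance instGroup : Group (SchurC S hS) :=
  Group.ofLeftAxioms
    (fun a b c => by
      refine Prod.ext (mul_assoc _ _ _) ?_
      show omegaChar S (a.1 * b.1) c.1 * (omegaChar S a.1 b.1 * a.2 * b.2) * c.2 =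
        omegaChar S a.1 (b.1 * c.1) * a.2 * (omegaChar S b.1 c.1 * b.2 * c.2)
      refine MonoidHom.ext fun α => ?_
      simp only [MonoidHom.mul_apply]
      have hα : omegaChar S a.1 b.1 α * omegaChar S (a.1 * b.1) c.1 α =
          omegaChar S a.1 (b.1 * c.1) α * omegaChar S b.1 c.1 α :=
        congrArg (fun f : S →* ℂˣ => f α) (omega_cocycle hS a.1 b.1 c.1)
      calc omegaChar S (a.1 * b.1) c.1 α * (omegaChar S a.1 b.1 α * a.2 α * b.2 α) * c.2 α
          = (omegaChar S a.1 b.1 α * omegaChar S (a.1 * b.1) c.1 α) * (a.2 α * b.2 α * c.2 α) :=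
            helper1 _ _ _ _ _
        _ = (omegaChar S a.1 (b.1 * c.1) α * omegaChar S b.1 c.1 α) * (a.2 α * b.2 α * c.2 α) := by
            rw [hα]
        _ = omegaChar S a.1 (b.1 * c.1) α * a.2 α * (omegaChar S b.1 c.1 α * b.2 α * c.2 α) :=
            helper2 _ _ _ _ _)
    (fun a => by
      refine Prod.ext (one_mul _) ?_
      show omegaChar S 1 a.1 * (omegaChar S 1 1)⁻¹ * a.2 = a.2
      rw [omega_one_left hS]
      refine MonoidHom.ext fun α => ?_
      simp only [MonoidHom.mul_apply, MonoidHom.inv_apply]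
      simp)
    (fun a => by
      refine Prod.ext (inv_mul_cancel _) ?_
      show omegaChar S a.1⁻¹ a.1 * ((omegaChar S a.1 a.1⁻¹)⁻¹ * (omegaChar S 1 1)⁻¹ * a.2⁻¹) * a.2
          = (omegaChar S 1 1)⁻¹
      rw [← omega_inv hS]
      refine MonoidHom.ext fun α => ?_
      simp only [MonoidHom.mul_apply, MonoidHom.inv_apply]
      exact helper3 _ _ _)

end SchurC

end Schur

section Standard

variable {G E : Type*} [Group G] [Group E]

/-- The homomorphism `η̇ : Hom(A,ℂˣ) → (G → G → ℂˣ)`, `λ ↦ λ∘γ`, associated to a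
cocycle `γ` of a central extension with kernel `A = ker π`. -/
def etaDot (π : E →* G) (γ : G → G → ↥π.ker) : ((↥π.ker) →* ℂˣ) →* (G → G → ℂˣ) where
  toFun lam := fun g h => lam (γ g h)
  map_one' := rfl
  map_mul' _ _ := rfl

/-- The cocycle identity for the cocycle `γ` of a central extension, defined by
`σ(g)σ(h) = σ(gh)γ(g,h)`. -/
theorem gamma_cocycle (π : E →* G) (hcentral : π.ker ≤ Subgroup.center E)
    (σ : G → E) (γ : G → G → ↥π.ker)
    (hγ : ∀ g h : G, σ g * σ h = σ (g * h) * (γ g h : E)) (x y z : G) :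
    γ x y * γ (x * y) z = γ x (y * z) * γ y z := by
  have comm : ∀ (a : ↥π.ker) (w : E), w * a = (a : E) * w := fun a w =>
    Subgroup.mem_center_iff.mp (hcentral a.2) w
  have e1 : σ x * σ y * σ z = σ (x * y * z) * ((γ x y : E) * (γ (x * y) z : E)) := by
    rw [hγ x y, mul_assoc, ← comm (γ x y) (σ z), ← mul_assoc, hγ (x * y) z,
      mul_assoc, comm (γ x y) ((γ (x * y) z : E))]
  have e2 : σ x * σ y * σ z = σ (x * y * z) * ((γ x (y * z) : E) * (γ y z : E)) := by
    rw [mul_assoc, hγ y z, ← mul_assoc, hγ x (y * z), mul_assoc, ← mul_assoc x y z]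
  have e3 : (γ x y : E) * (γ (x * y) z : E) = (γ x (y * z) : E) * (γ y z : E) :=
    mul_left_cancel (e1.symm.trans e2)
  exact Subtype.ext (by push_cast; exact e3)

/-- Each element of the range of `η̇` is a 2-cocycle. -/
theorem etaDot_range_isCocycle (π : E →* G) (hcentral : π.ker ≤ Subgroup.center E)
    (σ : G → E) (γ : G → G → ↥π.ker)
    (hγ : ∀ g h : G, σ g * σ h = σ (g * h) * (γ g h : E)) :
    ∀ α ∈ (etaDot π γ).range, IsCocycle α := by
  rintro α ⟨lam, rfl⟩ x y z
  show lam (γ x y) * lam (γ (x * y) z) = lam (γ x (y * z)) * lam (γ y z)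
  rw [← map_mul, ← map_mul, gamma_cocycle π hcentral σ γ hγ]

end Standard

/-!
Dualising the surjection `η̇ : Â → S` gives an embedding `Š ↪ Â^ ≅ A`, `θ ↦ e(θ)`, which sends
`ω(g,h)` to `γ(g,h)`. Its image lies in the subgroup generated by the `γ(g,h)`, because a
character of `A` killing all `γ(g,h)` is killed by `η̇`. Hence `(g, θ) ↦ σ(g) e(θ)` is an
injective homomorphism `Š ∝ G → E`: multiplicativity is the defining relation of `γ` together
with centrality of `A`, and injectivity follows by applying `π`. Its image contains every `σ(g)`
and is contained in `⟨σ(g)⟩` since `γ(g,h) = σ(gh)⁻¹σ(g)σ(h)`.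
-/

section RangeDual

open CommGroup

variable {A P : Type*} [CommGroup A] [Finite A] [Group P] (η : (A →* ℂˣ) →* P)

/-- The dual of the corestriction `Â → η(Â)`, read in `A` through double duality. -/
noncomputable def rangeDualHom : (η.range →* ℂˣ) →* A :=
  (monoidHomMonoidHomEquiv A ℂ).toMonoidHom.comp (MonoidHom.compHom' η.rangeRestrict)

theorem apply_rangeDualHom (θ : η.range →* ℂˣ) (χ : A →* ℂˣ) :
    χ (rangeDualHom η θ) = θ (η.rangeRestrict χ) :=
  apply_monoidHomMonoidHomEquiv ℂ χ _

theorem rangeDualHom_injective : Function.Injective (rangeDualHom η) := by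
  intro θ₁ θ₂ h
  refine MonoidHom.ext fun s => ?_
  obtain ⟨χ, rfl⟩ := η.rangeRestrict_surjective s
  simpa only [apply_rangeDualHom] using congrArg χ h

theorem rangeDualHom_eq_of_forall {θ : η.range →* ℂˣ} {a : A}
    (h : ∀ χ : A →* ℂˣ, θ (η.rangeRestrict χ) = χ a) : rangeDualHom η θ = a := by
  rw [← forall_apply_eq_apply_iff A (M := ℂ)]
  simpa only [apply_rangeDualHom] using h

theorem rangeDualHom_mem {H : Subgroup A} (hH : ∀ χ : A →* ℂˣ, (∀ a ∈ H, χ a = 1) → η χ = 1)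
    (θ : η.range →* ℂˣ) : rangeDualHom η θ ∈ H := by
  rw [← forall_monoidHom_apply_eq_one_iff ℂ]
  intro χ hχ
  have : η.rangeRestrict χ = 1 := Subtype.ext (hH χ hχ)
  rw [apply_rangeDualHom, this, map_one]

end RangeDual

namespace SchurC

variable {G E : Type*} [Group G] [Group E] {S : Subgroup (G → G → ℂˣ)}
  {hS : ∀ α ∈ S, IsCocycle α} (σ : G → E) (e : (S →* ℂˣ) →* E)

@[simp] theorem fst_mk (g : G) (θ : S →* ℂˣ) : (mk hS g θ).fst = g := rfl

@[simp] theorem snd_mk (g : G) (θ : S →* ℂˣ) : (mk hS g θ).snd = θ := rfl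

@[simp] theorem fst_one : (1 : SchurC S hS).fst = 1 := rfl

@[simp] theorem snd_one : (1 : SchurC S hS).snd = (omegaChar S 1 1)⁻¹ := rfl

@[simp] theorem fst_mul (x y : SchurC S hS) : (x * y).fst = x.fst * y.fst := rfl

@[simp] theorem snd_mul (x y : SchurC S hS) :
    (x * y).snd = omegaChar S x.fst y.fst * x.snd * y.snd := rfl

theorem ext {x y : SchurC S hS} (hfst : x.fst = y.fst) (hsnd : x.snd = y.snd) : x = y :=
  Prod.ext hfst hsnd

def lift (he : ∀ θ, e θ ∈ Subgroup.center E)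
    (hσ : ∀ g h, σ g * σ h = σ (g * h) * e (omegaChar S g h)) : SchurC S hS →* E where
  toFun x := σ x.fst * e x.snd
  map_one' := by
    have hσ₁ : σ 1 = e (omegaChar S 1 1) := by simpa using hσ 1 1
    rw [fst_one, snd_one, hσ₁, ← map_mul]
    exact (congrArg e (mul_inv_cancel _)).trans (map_one e)
  map_mul' x y := by
    rw [fst_mul, snd_mul, map_mul, map_mul, ← mul_assoc, ← mul_assoc, ← hσ,
      mul_assoc (σ _) (σ _) (e _), Subgroup.mem_center_iff.mp (he _) (σ _)]
    simp only [mul_assoc]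

variable {σ e} {he : ∀ θ, e θ ∈ Subgroup.center E}
  {hσ : ∀ g h, σ g * σ h = σ (g * h) * e (omegaChar S g h)}

theorem lift_apply (x : SchurC S hS) : lift σ e he hσ x = σ x.fst * e x.snd := rfl

theorem lift_injective (π : E →* G) (hsec : ∀ g, π (σ g) = g) (he_ker : ∀ θ, π (e θ) = 1)
    (he_inj : Function.Injective e) : Function.Injective (lift σ e he hσ (hS := hS)) := by
  intro x y hxy
  simp only [lift_apply] at hxy
  have hfst : x.fst = y.fst := by
    simpa only [map_mul, hsec, he_ker, mul_one] using congrArg π hxy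
  rw [hfst] at hxy
  exact ext hfst (he_inj (mul_left_cancel hxy))

theorem range_lift (he_mem : ∀ θ, e θ ∈ Subgroup.closure (Set.range σ)) :
    (lift σ e he hσ (hS := hS)).range = Subgroup.closure (Set.range σ) := by
  refine le_antisymm ?_ ((Subgroup.closure_le _).mpr ?_)
  · rintro _ ⟨x, rfl⟩
    exact mul_mem (Subgroup.subset_closure ⟨x.fst, rfl⟩) (he_mem x.snd)
  · rintro _ ⟨g, rfl⟩
    exact ⟨mk hS g 1, by rw [lift_apply, fst_mk, snd_mk, map_one, mul_one]⟩

end SchurC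

section CentralExtension

variable {G E : Type*} [Group G] [Group E] {π : E →* G} (hcentral : π.ker ≤ Subgroup.center E)

abbrev kerCommGroup : CommGroup π.ker :=
  { (inferInstance : Group π.ker) with
    mul_comm := fun a b => Subtype.ext (Subgroup.mem_center_iff.mp (hcentral b.2) a) }

variable [Finite E] (γ : G → G → π.ker)

noncomputable def cocycleDualHom : ((etaDot π γ).range →* ℂˣ) →* E :=
  letI := kerCommGroup hcentral
  π.ker.subtype.comp (rangeDualHom (etaDot π γ))

theorem cocycleDualHom_injective : Function.Injective (cocycleDualHom hcentral γ) :=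
  letI := kerCommGroup hcentral
  π.ker.subtype_injective.comp (rangeDualHom_injective _)

theorem cocycleDualHom_mem_ker (θ : (etaDot π γ).range →* ℂˣ) :
    cocycleDualHom hcentral γ θ ∈ π.ker :=
  SetLike.coe_mem _

theorem cocycleDualHom_omegaChar (g h : G) :
    cocycleDualHom hcentral γ (omegaChar (etaDot π γ).range g h) = γ g h := by
  let _ := kerCommGroup hcentral
  exact congrArg Subtype.val (rangeDualHom_eq_of_forall _ fun _ => rfl)

theorem cocycleDualHom_mem_closure {σ : G → E} (hγ : ∀ g h, σ g * σ h = σ (g * h) * (γ g h : E))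
    (θ : (etaDot π γ).range →* ℂˣ) :
    cocycleDualHom hcentral γ θ ∈ Subgroup.closure (Set.range σ) := by
  let _ := kerCommGroup hcentral
  have hγ_mem (g h : G) : (γ g h : E) ∈ Subgroup.closure (Set.range σ) := by
    rw [eq_inv_mul_of_mul_eq (hγ g h).symm]
    exact mul_mem (inv_mem (Subgroup.subset_closure ⟨_, rfl⟩))
      (mul_mem (Subgroup.subset_closure ⟨_, rfl⟩) (Subgroup.subset_closure ⟨_, rfl⟩))
  refine rangeDualHom_mem (etaDot π γ)
    (H := (Subgroup.closure (Set.range σ)).comap π.ker.subtype) (fun χ hχ => ?_) θ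
  funext g h
  exact hχ (γ g h) (hγ_mem g h)

end CentralExtension

theorem schur_construction_of_central_extension_general
    {G E : Type*} [Group G] [Group E] [Finite E]
    (π : E →* G)
    (hcentral : π.ker ≤ Subgroup.center E)
    (σ : G → E) (hsec : ∀ g : G, π (σ g) = g)
    (γ : G → G → ↥π.ker)
    (hγ : ∀ g h : G, σ g * σ h = σ (g * h) * (γ g h : E)) :
    ∃ ψ : SchurC (etaDot π γ).range (etaDot_range_isCocycle π hcentral σ γ hγ) →* E,
      Function.Injective ψ ∧
      ψ.range = Subgroup.closure (Set.range σ) ∧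
      ∀ (g : G) (l : List (G × G)),
        ψ (SchurC.mk (etaDot_range_isCocycle π hcentral σ γ hγ) g
            ((l.map (fun q : G × G => omegaChar (etaDot π γ).range q.1 q.2)).prod)) =
          σ g * (l.map (fun q : G × G => (γ q.1 q.2 : E))).prod := by
  set e := cocycleDualHom hcentral γ
  have he_omega : ∀ g h, e (omegaChar (etaDot π γ).range g h) = γ g h :=
    cocycleDualHom_omegaChar hcentral γ
  have he_center (θ : (etaDot π γ).range →* ℂˣ) : e θ ∈ Subgroup.center E :=
    hcentral (cocycleDualHom_mem_ker hcentral γ θ)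
  have hσ (g h : G) : σ g * σ h = σ (g * h) * e (omegaChar _ g h) := by rw [he_omega, hγ]
  refine ⟨SchurC.lift σ e he_center hσ, SchurC.lift_injective π hsec
      (cocycleDualHom_mem_ker hcentral γ) (cocycleDualHom_injective hcentral γ),
    SchurC.range_lift (cocycleDualHom_mem_closure hcentral γ hγ), fun g l => ?_⟩
  rw [SchurC.lift_apply, SchurC.fst_mk, SchurC.snd_mk]
  exact congrArg (σ g * ·) ((map_list_prod e _).trans <| by
    rw [List.map_map]
    exact congrArg List.prod (List.map_congr_left fun q _ => he_omega q.1 q.2))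

theorem schur_construction_of_central_extension
    {G E : Type*} [Group G] [Group E] [Finite G] [Finite E]
    (π : E →* G) (hsurj : Function.Surjective π)
    (hcentral : π.ker ≤ Subgroup.center E)
    (σ : G → E) (hsec : ∀ g : G, π (σ g) = g)
    (γ : G → G → ↥π.ker)
    (hγ : ∀ g h : G, σ g * σ h = σ (g * h) * (γ g h : E)) :
    ∃ ψ : SchurC (etaDot π γ).range (etaDot_range_isCocycle π hcentral σ γ hγ) →* E,
      Function.Injective ψ ∧
      ψ.range = Subgroup.closure (Set.range σ) ∧
      ∀ (g : G) (l : List (G × G)),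
        ψ (SchurC.mk (etaDot_range_isCocycle π hcentral σ γ hγ) g
            ((l.map (fun q : G × G => omegaChar (etaDot π γ).range q.1 q.2)).prod)) =
          σ g * (l.map (fun q : G × G => (γ q.1 q.2 : E))).prod :=
  schur_construction_of_central_extension_general π hcentral σ hsec γ hγ
end
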